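/- Consider SDC applied to a collocation method whose underlying RKM has order p and satisfies B(p) and C(η). Suppose the Kth SDC iterate has order p_K with p_K < η_{K+1}, and each EED A^k_Δ satisfies C_{W_k}(η_k) with 1 ≤ η_k ≤ η, η_{k+1} ≤ η_k + 1 for k = 1,…,K+1, and W_{K+1, p_K+1} = 1/(p_K+1). Then the (K+1)st SDC iterate has order p_{K+1} = min{p_K + 2, p}, i.e. an order jump of two occurs in one iteration. -/

import Mathlib

inductive RTree where
  | node : List RTree → RTree

namespace RTree

def size : RTree → ℕ
  | .node ts => 1 + (ts.attach.map (fun x => size x.1)).sum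
decreasing_by
  have := List.sizeOf_lt_of_mem x.2; simp only [RTree.node.sizeOf_spec]; omega

def height : RTree → ℕ
  | .node ts => 1 + (ts.attach.map (fun x => height x.1)).foldr max 0
decreasing_by
  have := List.sizeOf_lt_of_mem x.2; simp only [RTree.node.sizeOf_spec]; omega

def isBamboo : RTree → Prop
  | .node [] => True
  | .node [t] => isBamboo t
  | .node (_ :: _ :: _) => False

def bamboo : ℕ → RTree
  | 0 => .node []
  | n + 1 => .node [bamboo n]

def factorial : RTree → ℕ
  | .node ts => (RTree.node ts).size * (ts.attach.map (fun x => factorial x.1)).prod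
decreasing_by
  have := List.sizeOf_lt_of_mem x.2; simp only [RTree.node.sizeOf_spec]; omega

end RTree

open scoped BigOperators

/-!
Under `C(η)` and `C_W(η_k)`, every SDC stage coefficient on a small enough tree `τ` is a monomial
`c_i ^ |τ| * e(τ)` in the nodes. For the `K`th iterate, the order condition on the tree `[τ]`
together with `B(p)` forces `e(τ) = 1 / γ(τ)` whenever `|τ| < p_K`. In the next sweep, a tree with
`p_K + 1` nodes gets `C` applied to `c ^ p_K * E` (unknown `E`, from the old iterate) and `C_W`
applied to `c ^ p_K * (D - E)` (exact `D`, from the new one); `W_{K+1, p_K+1} = 1 / (p_K + 1)`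
makes the unknown `E` cancel. So the new stages are exact up to `p_K + 1` nodes, and `B(p)` turns
this into order `p_K + 2` of the output.
-/

namespace RTree

theorem childInduction {motive : RTree → Prop}
    (node : ∀ π : List RTree, (∀ σ ∈ π, motive σ) → motive (.node π)) : ∀ t, motive t
  | .node π => node π fun σ _ => childInduction node σ
decreasing_by
  have := List.sizeOf_lt_of_mem ‹σ ∈ π›; simp only [RTree.node.sizeOf_spec]; omega

theorem size_node (π : List RTree) : (node π).size = (π.map size).sum + 1 := by
  rw [size, List.attach_map_val, Nat.add_comm]

theorem factorial_node (π : List RTree) :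
    (node π).factorial = (node π).size * (π.map factorial).prod := by
  rw [factorial, List.attach_map_val]

theorem size_le_of_mem {π : List RTree} {σ : RTree} (hσ : σ ∈ π) : σ.size ≤ (π.map size).sum :=
  List.single_le_sum (fun _ _ => Nat.zero_le _) _ (List.mem_map_of_mem hσ)

theorem inv_factorial_node (π : List RTree) :
    ((node π).factorial : ℝ)⁻¹
      = (((π.map size).sum : ℝ) + 1)⁻¹ * (π.map fun σ => (σ.factorial : ℝ)⁻¹).prod := by
  rw [factorial_node, size_node, Nat.cast_mul, Nat.cast_list_prod, mul_inv, List.prod_inv]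
  simp only [List.map_map, Function.comp_def]
  push_cast
  rfl

theorem prod_map_eq_pow_mul (x : ℝ) {f g : RTree → ℝ} {π : List RTree}
    (h : ∀ σ ∈ π, f σ = x ^ σ.size * g σ) :
    (π.map f).prod = x ^ (π.map size).sum * (π.map g).prod := by
  induction π with
  | nil => simp
  | cons σ π ih =>
    simp only [List.map_cons, List.prod_cons, List.sum_cons, pow_add,
      h σ List.mem_cons_self, ih fun τ hτ => h τ (List.mem_cons_of_mem σ hτ)]
    ring

end RTree

theorem Nat.apply_le_apply_add_sub {f : ℕ → ℕ} {m n : ℕ} (hmn : m ≤ n)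
    (hf : ∀ k, m ≤ k → k < n → f (k + 1) ≤ f k + 1) : f n ≤ f m + (n - m) := by
  induction n, hmn using Nat.le_induction with
  | base => simp
  | succ n hmn ih =>
    have := hf n hmn n.lt_succ_self
    have := ih fun k hk hkn => hf k hk (hkn.trans n.lt_succ_self)
    omega

section SDC

variable {s : ℕ}

def SimplifyingB (b c : Fin s → ℝ) (p : ℕ) : Prop :=
  ∀ q, 1 ≤ q → q ≤ p → ∑ i, b i * c i ^ (q - 1) = 1 / (q : ℝ)

def SimplifyingC (a : Fin s → Fin s → ℝ) (c : Fin s → ℝ) (η : ℕ) : Prop :=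
  ∀ i, ∀ q, 1 ≤ q → q ≤ η → ∑ j, a i j * c j ^ (q - 1) = c i ^ q / q

def SimplifyingCW (a : Fin s → Fin s → ℝ) (c : Fin s → ℝ) (w : ℕ → ℝ) (η : ℕ) : Prop :=
  ∀ i, ∀ q, 1 ≤ q → q ≤ η → ∑ j, a i j * c j ^ (q - 1) = c i ^ q * w q

variable {a : Fin s → Fin s → ℝ} {b c : Fin s → ℝ} {w : ℕ → ℝ} {p η η' n : ℕ}

theorem SimplifyingB.sum_mul_pow (h : SimplifyingB b c p) (hn : n + 1 ≤ p) :
    ∑ i, b i * c i ^ n = 1 / ((n : ℝ) + 1) := by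
  simpa using h (n + 1) n.succ_pos hn

theorem SimplifyingC.sum_mul_pow (h : SimplifyingC a c η) (i : Fin s) (hn : n + 1 ≤ η) :
    ∑ j, a i j * c j ^ n = c i ^ (n + 1) / ((n : ℝ) + 1) := by
  simpa using h i (n + 1) n.succ_pos hn

theorem SimplifyingCW.sum_mul_pow (h : SimplifyingCW a c w η) (i : Fin s) (hn : n + 1 ≤ η) :
    ∑ j, a i j * c j ^ n = c i ^ (n + 1) * w (n + 1) := by
  simpa using h i (n + 1) n.succ_pos hn

theorem SimplifyingC.mono (h : SimplifyingC a c η) (hη : η' ≤ η) : SimplifyingC a c η' :=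
  fun i q hq hqη => h i q hq (hqη.trans hη)

theorem SimplifyingCW.mono (h : SimplifyingCW a c w η) (hη : η' ≤ η) :
    SimplifyingCW a c w η' :=
  fun i q hq hqη => h i q hq (hqη.trans hη)

def IsMonomialStage (c : Fin s → ℝ) (g : Fin s → RTree → ℝ) (τ : RTree) : Prop :=
  ∃ e : ℝ, ∀ i, g i τ = c i ^ τ.size * e

/-- `c_i ^ |τ| / γ(τ)` is the collocation method's own stage coefficient on `τ` under `C(|τ|)`. -/
def IsCollocationStage (c : Fin s → ℝ) (g : Fin s → RTree → ℝ) (τ : RTree) : Prop :=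
  ∀ i, g i τ = c i ^ τ.size * (τ.factorial : ℝ)⁻¹

variable {g : Fin s → RTree → ℝ} {π : List RTree}

theorem exists_prod_map_eq_pow_mul_of_isMonomialStage (h : ∀ σ ∈ π, IsMonomialStage c g σ) :
    ∃ E : ℝ, ∀ i, (π.map (g i)).prod = c i ^ (π.map RTree.size).sum * E := by
  choose! e he using h
  exact ⟨(π.map e).prod, fun i => RTree.prod_map_eq_pow_mul _ fun σ hσ => he σ hσ i⟩

theorem prod_map_eq_pow_mul_of_isCollocationStage (h : ∀ σ ∈ π, IsCollocationStage c g σ)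
    (i : Fin s) : (π.map (g i)).prod
      = c i ^ (π.map RTree.size).sum * (π.map fun σ => (σ.factorial : ℝ)⁻¹).prod :=
  RTree.prod_map_eq_pow_mul _ fun σ hσ => h σ hσ i

theorem output_node_eq {out : RTree → ℝ}
    (hout : ∀ π : List RTree, out (.node π) = ∑ i, b i * (π.map (g i)).prod)
    (hB : SimplifyingB b c p) (hp : (π.map RTree.size).sum + 1 ≤ p) {E : ℝ}
    (hg : ∀ i, (π.map (g i)).prod = c i ^ (π.map RTree.size).sum * E) :
    out (.node π) = (((π.map RTree.size).sum : ℝ) + 1)⁻¹ * E := by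
  simp only [hout, hg, ← mul_assoc, ← Finset.sum_mul, hB.sum_mul_pow hp, one_div]

theorem output_node_eq_inv_factorial {out : RTree → ℝ}
    (hout : ∀ π : List RTree, out (.node π) = ∑ i, b i * (π.map (g i)).prod)
    (hB : SimplifyingB b c p) (hp : (RTree.node π).size ≤ p)
    (hπ : ∀ σ ∈ π, IsCollocationStage c g σ) :
    out (.node π) = ((RTree.node π).factorial : ℝ)⁻¹ := by
  rw [RTree.inv_factorial_node]
  exact output_node_eq hout hB (RTree.size_node π ▸ hp)
    (prod_map_eq_pow_mul_of_isCollocationStage hπ)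

theorem IsMonomialStage.isCollocationStage {out : RTree → ℝ} {σ : RTree}
    (hσ : IsMonomialStage c g σ)
    (hout : ∀ π : List RTree, out (.node π) = ∑ i, b i * (π.map (g i)).prod)
    (hB : SimplifyingB b c p) (hp : σ.size + 1 ≤ p)
    (horder : out (.node [σ]) = ((RTree.node [σ]).factorial : ℝ)⁻¹) :
    IsCollocationStage c g σ := by
  obtain ⟨e, he⟩ := hσ
  have hout_σ := output_node_eq hout hB (π := [σ]) (E := e) (by simpa using hp)
    (fun i => by simp [he])
  rw [horder, RTree.inv_factorial_node] at hout_σ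
  have he_σ : e = (σ.factorial : ℝ)⁻¹ := by
    simpa [(by positivity : ((σ.size : ℝ) + 1)⁻¹ ≠ 0)] using hout_σ.symm
  exact fun i => he_σ ▸ he i

/-- One SDC sweep: `cur` is the new iterate `α^[k]`, `prev` the old one `α^[k-1]`, `ad` is `Ã^k`. -/
def IsSweep (a ad : Fin s → Fin s → ℝ) (prev cur : Fin s → RTree → ℝ) : Prop :=
  ∀ i, ∀ π : List RTree, cur i (.node π) =
    (∑ j, (a i j - ad i j) * (π.map (prev j)).prod) + ∑ j, ad i j * (π.map (cur j)).prod

variable {ad : Fin s → Fin s → ℝ} {prev cur : Fin s → RTree → ℝ}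

theorem IsSweep.node_eq (h : IsSweep a ad prev cur) (i : Fin s) {E₁ E₂ : ℝ}
    (hC : SimplifyingC a c (n + 1)) (hCW : SimplifyingCW ad c w (n + 1))
    (hprev : ∀ j, (π.map (prev j)).prod = c j ^ n * E₁)
    (hcur : ∀ j, (π.map (cur j)).prod = c j ^ n * E₂) :
    cur i (.node π) = c i ^ (n + 1) * (E₁ / ((n : ℝ) + 1) + w (n + 1) * (E₂ - E₁)) := by
  have hsplit : (∑ j, (a i j - ad i j) * (c j ^ n * E₁)) + ∑ j, ad i j * (c j ^ n * E₂)
      = (∑ j, a i j * c j ^ n) * E₁ + (∑ j, ad i j * c j ^ n) * (E₂ - E₁) := by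
    simp only [Finset.sum_mul, ← Finset.sum_add_distrib]
    exact Finset.sum_congr rfl fun j _ => by ring
  rw [h i π]
  simp only [hprev, hcur]
  rw [hsplit, hC.sum_mul_pow i le_rfl,
    hCW.sum_mul_pow i le_rfl]
  ring

theorem IsSweep.isCollocationStage {m : ℕ} (h : IsSweep a ad prev cur)
    (hC : SimplifyingC a c (n + 1)) (hCW : SimplifyingCW ad c w (n + 1))
    (hw : w (n + 1) = 1 / ((n : ℝ) + 1))
    (hprev_mono : ∀ σ : RTree, σ.size ≤ n → IsMonomialStage c prev σ)
    (hprev : ∀ σ : RTree, σ.size < n → σ.size < m → IsCollocationStage c prev σ) :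
    ∀ σ : RTree, σ.size ≤ n + 1 → σ.size ≤ m → IsCollocationStage c cur σ := by
  intro σ
  induction σ using RTree.childInduction with
  | node π ih =>
    intro hn hm i
    set S := (π.map RTree.size).sum
    have hsize : (RTree.node π).size = S + 1 := RTree.size_node π
    have hchild : ∀ σ ∈ π, σ.size ≤ S := fun σ hσ => RTree.size_le_of_mem hσ
    have hcur := prod_map_eq_pow_mul_of_isCollocationStage (c := c) fun σ hσ =>
      have := hchild σ hσ; ih σ hσ (by omega) (by omega)
    rw [RTree.inv_factorial_node, hsize]
    rcases Nat.lt_or_ge S n with hS | hS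
    · have hprev_π := prod_map_eq_pow_mul_of_isCollocationStage (c := c) fun σ hσ =>
        have := hchild σ hσ; hprev σ (by omega) (by omega)
      rw [h.node_eq i (hC.mono (by omega)) (hCW.mono (by omega)) hprev_π hcur]
      ring
    · obtain rfl : S = n := by omega
      obtain ⟨E, hE⟩ := exists_prod_map_eq_pow_mul_of_isMonomialStage fun σ hσ =>
        hprev_mono σ (hchild σ hσ)
      rw [h.node_eq i hC hCW hE hcur, hw]
      ring

theorem isMonomialStage_of_isSweep {aΔ : ℕ → Fin s → Fin s → ℝ} {W : ℕ → ℕ → ℝ}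
    {η : ℕ → ℕ} {ηA L : ℕ} {α : ℕ → Fin s → RTree → ℝ}
    (h0 : ∀ i τ, α 0 i τ = 0)
    (hsweep : ∀ k, 1 ≤ k → k ≤ L → IsSweep a (aΔ k) (α (k - 1)) (α k))
    (hC : SimplifyingC a c ηA) (hCW : ∀ k, 1 ≤ k → k ≤ L → SimplifyingCW (aΔ k) c (W k) (η k))
    (hηA : ∀ k, 1 ≤ k → k ≤ L → η k ≤ ηA)
    (hη : ∀ k, 1 ≤ k → k ≤ L → η L ≤ η k + (L - k)) :
    ∀ τ : RTree, ∀ k ≤ L, τ.size + L ≤ η L + k → IsMonomialStage c (α k) τ := by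
  intro τ
  induction τ using RTree.childInduction with
  | node π ih =>
    intro k hkL hτ
    rcases Nat.eq_zero_or_pos k with rfl | hk
    · exact ⟨0, fun i => by simp [h0]⟩
    set S := (π.map RTree.size).sum
    have hsize : (RTree.node π).size = S + 1 := RTree.size_node π
    have hchild : ∀ σ ∈ π, σ.size ≤ S := fun σ hσ => RTree.size_le_of_mem hσ
    have hS : S + 1 ≤ η k := by have := hη k hk hkL; omega
    obtain ⟨E₁, hE₁⟩ := exists_prod_map_eq_pow_mul_of_isMonomialStage fun σ hσ =>
      have := hchild σ hσ; ih σ hσ (k - 1) (by omega) (by omega)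
    obtain ⟨E₂, hE₂⟩ := exists_prod_map_eq_pow_mul_of_isMonomialStage fun σ hσ =>
      have := hchild σ hσ; ih σ hσ k hkL (by omega)
    refine ⟨E₁ / ((S : ℝ) + 1) + W k (S + 1) * (E₂ - E₁), fun i => ?_⟩
    rw [hsize]
    exact (hsweep k hk hkL).node_eq i (hC.mono (hS.trans (hηA k hk hkL)))
      ((hCW k hk hkL).mono hS) hE₁ hE₂

end SDC

theorem sdc_order_jump_general (s K : ℕ)
    (b : Fin s → ℝ) (c : Fin s → ℝ)
    (a : Fin s → Fin s → ℝ) (aΔ : ℕ → Fin s → Fin s → ℝ)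
    (β : RTree → ℝ)
    (p : ℕ) (η : ℕ → ℕ) (ηA : ℕ) (W : ℕ → ℕ → ℝ)
    (pK : ℕ)
    -- the collocation method and its coefficient map
    (hordp : ∀ τ : RTree, τ.size ≤ p → β τ = 1 / (τ.factorial : ℝ))
    -- simplifying assumptions
    (hB : ∀ q, 1 ≤ q → q ≤ p → ∑ i, b i * c i ^ (q - 1) = 1 / (q : ℝ))
    (hC : ∀ i, ∀ q, 1 ≤ q → q ≤ ηA → ∑ j, a i j * c j ^ (q - 1) = c i ^ q / q)
    (hCW : ∀ k, 1 ≤ k → k ≤ K + 1 → ∀ i, ∀ q, 1 ≤ q → q ≤ η k →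
      ∑ j, aΔ k i j * c j ^ (q - 1) = c i ^ q * W k q)
    (hηlb : ∀ k, 1 ≤ k → k ≤ K + 1 → 1 ≤ η k ∧ η k ≤ ηA)
    (hηstep : ∀ k, 1 ≤ k → k < K + 1 → η (k + 1) ≤ η k + 1)
    (hpK : pK < η (K + 1))
    (hW : W (K + 1) (pK + 1) = 1 / ((pK : ℝ) + 1))
    -- the SDC iteration
    (α : ℕ → Fin s → RTree → ℝ) (αout : ℕ → RTree → ℝ)
    (h0 : ∀ i, ∀ τ : RTree, α 0 i τ = 0)
    (hrec : ∀ k, 1 ≤ k → k ≤ K + 1 → ∀ i, ∀ π : List RTree, α k i (.node π) =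
      (∑ j, (a i j - aΔ k i j) * (π.map (α (k - 1) j)).prod) +
        ∑ j, aΔ k i j * (π.map (α k j)).prod)
    (hout : ∀ k, ∀ π : List RTree, αout k (.node π) = ∑ i, b i * (π.map (α k i)).prod)
    -- the Kth iterate has SDC order pK
    (hordK : ∀ τ : RTree, τ.size ≤ pK → αout K τ = β τ) :
    ∀ τ : RTree, τ.size ≤ min (pK + 2) p → αout (K + 1) τ = β τ := by
  have hη : ∀ k, 1 ≤ k → k ≤ K + 1 → η (K + 1) ≤ η k + (K + 1 - k) := fun k hk hkL =>
    Nat.apply_le_apply_add_sub hkL fun j hj hjL => hηstep j (hk.trans hj) hjL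
  have hmonoK : ∀ σ : RTree, σ.size ≤ pK → IsMonomialStage c (α K) σ := fun σ hσ =>
    isMonomialStage_of_isSweep h0 hrec hC hCW (fun k hk hkL => (hηlb k hk hkL).2) hη σ K
      K.le_succ (by omega)
  have hcollK : ∀ σ : RTree, σ.size < pK → σ.size < p → IsCollocationStage c (α K) σ :=
    fun σ hσK hσp => (hmonoK σ hσK.le).isCollocationStage (hout K) hB hσp <| by
      have hsize : (RTree.node [σ]).size = σ.size + 1 := by simp [RTree.size_node]
      rw [hordK _ (by omega), hordp _ (by omega), one_div]
  have hcollK1 : ∀ σ : RTree, σ.size ≤ pK + 1 → σ.size ≤ p →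
      IsCollocationStage c (α (K + 1)) σ :=
    IsSweep.isCollocationStage (hrec (K + 1) K.succ_pos le_rfl)
      (SimplifyingC.mono hC (hpK.trans_le (hηlb (K + 1) K.succ_pos le_rfl).2))
      (SimplifyingCW.mono (hCW (K + 1) K.succ_pos le_rfl) hpK) hW hmonoK hcollK
  intro τ hτ
  obtain ⟨π⟩ := τ
  rw [hordp _ (by omega), one_div]
  exact output_node_eq_inv_factorial (hout (K + 1)) hB (by omega) fun σ hσ =>
    have := RTree.size_le_of_mem hσ
    have := RTree.size_node π
    hcollK1 σ (by omega) (by omega)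

/-- Order jump theorem (case 1): for SDC approximating a collocation method of order p
satisfying B(p) and C(η), if the Kth iterate has order p_K with p_K < η_{K+1} and all
EEDs satisfy C_{W_k}(η_k) with the stated compatibility conditions and
W_{K+1,p_K+1} = 1/(p_K+1), then the (K+1)st iterate has order min{p_K + 2, p}. -/
theorem sdc_order_jump (s K : ℕ)
    (b : Fin s → ℝ) (c : Fin s → ℝ)
    (a : Fin s → Fin s → ℝ) (aΔ : ℕ → Fin s → Fin s → ℝ)
    (β : RTree → ℝ) (βi : Fin s → RTree → ℝ)
    (p : ℕ) (η : ℕ → ℕ) (ηA : ℕ) (W : ℕ → ℕ → ℝ)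
    (pK : ℕ)
    -- the collocation method and its coefficient map
    (hβ : ∀ π : List RTree, β (.node π) = ∑ i, b i * (π.map (βi i)).prod)
    (hβi : ∀ i, ∀ π : List RTree, βi i (.node π) = ∑ j, a i j * (π.map (βi j)).prod)
    (hordp : ∀ τ : RTree, τ.size ≤ p → β τ = 1 / (τ.factorial : ℝ))
    -- simplifying assumptions
    (hB : ∀ q, 1 ≤ q → q ≤ p → ∑ i, b i * c i ^ (q - 1) = 1 / (q : ℝ))
    (hC : ∀ i, ∀ q, 1 ≤ q → q ≤ ηA → ∑ j, a i j * c j ^ (q - 1) = c i ^ q / q)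
    (hCW : ∀ k, 1 ≤ k → k ≤ K + 1 → ∀ i, ∀ q, 1 ≤ q → q ≤ η k →
      ∑ j, aΔ k i j * c j ^ (q - 1) = c i ^ q * W k q)
    (hηlb : ∀ k, 1 ≤ k → k ≤ K + 1 → 1 ≤ η k ∧ η k ≤ ηA)
    (hηstep : ∀ k, 1 ≤ k → k < K + 1 → η (k + 1) ≤ η k + 1)
    (hpK : pK < η (K + 1))
    (hW : W (K + 1) (pK + 1) = 1 / ((pK : ℝ) + 1))
    -- the SDC iteration
    (α : ℕ → Fin s → RTree → ℝ) (αout : ℕ → RTree → ℝ)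
    (h0 : ∀ i, ∀ τ : RTree, α 0 i τ = 0)
    (hrec : ∀ k, 1 ≤ k → k ≤ K + 1 → ∀ i, ∀ π : List RTree, α k i (.node π) =
      (∑ j, (a i j - aΔ k i j) * (π.map (α (k - 1) j)).prod) +
        ∑ j, aΔ k i j * (π.map (α k j)).prod)
    (hout : ∀ k, ∀ π : List RTree, αout k (.node π) = ∑ i, b i * (π.map (α k i)).prod)
    -- the Kth iterate has SDC order pK
    (hordK : ∀ τ : RTree, τ.size ≤ pK → αout K τ = β τ) :
    ∀ τ : RTree, τ.size ≤ min (pK + 2) p → αout (K + 1) τ = β τ :=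
  sdc_order_jump_general s K b c a aΔ β p η ηA W pK hordp hB hC hCW hηlb hηstep hpK hW α αout h0
    hrec hout hordK
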